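/- arXiv:1909.03286 — 7 statements merged into one kernel-verified Lean document; each statement's English description precedes it below -/
import Mathlib

section
/- For a connected graph G of order n, the average eccentricity of G is at most (1/n)·⌊3n²/4 − n/2⌋. -/
open SimpleGraph Finset

noncomputable def ecc {V : Type*} [Fintype V] (G : SimpleGraph V) (v : V) : ℕ :=
  Finset.univ.sup (G.dist v)

noncomputable def avec {V : Type*} [Fintype V] (G : SimpleGraph V) : ℝ :=
  (∑ v, (ecc G v : ℝ)) / (Fintype.card V)

/-
Induct on the number of vertices. Let `a, b` realise the diameter. Deleting `a`, which is
farthest from `b`, keeps the graph connected, and putting `a` back can only shorten distances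
between the other vertices. Hence a vertex `v ≠ a` gains eccentricity only if `a` is its unique
farthest vertex, and then by at most one (pass through a neighbour of `a`), while `a` itself
contributes at most `n - 1`. No vertex has both `a` and `b` as unique farthest vertex, so for one
of the two endpoints at most `n / 2` vertices gain. Finally `F n = ⌊(3n² - 2n) / 4⌋` satisfies
`F n = F (n - 1) + (n - 1) + ⌊n / 2⌋`.
-/

lemma SimpleGraph.dist_map_le {V W : Type*} {G : SimpleGraph V} {H : SimpleGraph W}
    (f : G →g H) {u v : V} (h : G.Reachable u v) : H.dist (f u) (f v) ≤ G.dist u v := by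
  obtain ⟨p, hp⟩ := h.exists_walk_length_eq_dist
  simpa [hp] using H.dist_le (p.map f)

lemma SimpleGraph.Connected.induce_compl_singleton_of_forall_dist_le {V : Type*}
    {G : SimpleGraph V} (hG : G.Connected) {a b : V} (hab : a ≠ b)
    (hfar : ∀ u, G.dist u b ≤ G.dist a b) : (G.induce {a}ᶜ).Connected := by
  classical
  have : Nonempty ({a}ᶜ : Set V) := ⟨⟨b, hab.symm⟩⟩
  suffices hreach : ∀ u : ({a}ᶜ : Set V), (G.induce {a}ᶜ).Reachable u ⟨b, hab.symm⟩ from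
    .mk fun u w => (hreach u).trans (hreach w).symm
  rintro ⟨u, hu⟩
  obtain ⟨p, hp⟩ := hG.exists_walk_length_eq_dist u b
  -- a shortest `u`-`b` walk through `a` would make `u` farther from `b` than `a` is
  have hpa : ∀ x ∈ p.support, x ∈ ({a}ᶜ : Set V) := by
    rintro x hx rfl
    have htake := G.dist_le (p.takeUntil x hx)
    have hdrop := G.dist_le (p.dropUntil x hx)
    have hlen := congrArg Walk.length (p.take_spec hx)
    rw [Walk.length_append] at hlen
    have hux := hG.pos_dist_of_ne hu
    linarith [hfar u]
  exact ⟨p.induce _ hpa⟩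

section Eccentricity

variable {V : Type*} [Fintype V] {G : SimpleGraph V}

lemma dist_le_ecc (G : SimpleGraph V) (v u : V) : G.dist v u ≤ ecc G v :=
  le_sup (mem_univ u)

lemma ecc_le_iff {v : V} {k : ℕ} : ecc G v ≤ k ↔ ∀ u, G.dist v u ≤ k := by
  simp [ecc]

lemma exists_dist_eq_ecc (G : SimpleGraph V) (v : V) : ∃ u, G.dist v u = ecc G v := by
  obtain ⟨u, -, hu⟩ := exists_mem_eq_sup univ ⟨v, mem_univ v⟩ (G.dist v)
  exact ⟨u, hu.symm⟩

lemma ecc_eq_zero [Subsingleton V] (G : SimpleGraph V) (v : V) : ecc G v = 0 := by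
  simp [ecc, Subsingleton.elim _ v]

lemma SimpleGraph.Connected.ecc_le_card_sub_one (hG : G.Connected) (v : V) :
    ecc G v ≤ Fintype.card V - 1 := by
  refine ecc_le_iff.2 fun u => ?_
  obtain ⟨p, hp, hlen⟩ := hG.exists_path_of_dist v u
  have := hp.length_lt
  omega

end Eccentricity

lemma dist_le_ecc_induce {V : Type*} {G : SimpleGraph V} {s : Set V} [Fintype s]
    (hs : (G.induce s).Connected) (v : s) {u : V} (hu : u ∈ s) :
    G.dist v u ≤ ecc (G.induce s) v :=
  (dist_map_le (Embedding.induce s).toHom (hs.preconnected v ⟨u, hu⟩)).trans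
    (dist_le_ecc _ v ⟨u, hu⟩)

section UniqueFarthest

variable {V : Type*} [Fintype V] {G : SimpleGraph V}

open scoped Classical in
noncomputable def uniqueFarthest (G : SimpleGraph V) (a : V) : Finset V :=
  {v | ∀ u ≠ a, G.dist v u < ecc G v}

lemma mem_uniqueFarthest {a v : V} :
    v ∈ uniqueFarthest G a ↔ ∀ u ≠ a, G.dist v u < ecc G v := by
  simp [uniqueFarthest]

lemma disjoint_uniqueFarthest {a b : V} (hab : a ≠ b) :
    Disjoint (uniqueFarthest G a) (uniqueFarthest G b) := by
  refine disjoint_left.2 fun v hva hvb => ?_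
  obtain ⟨w, hw⟩ := exists_dist_eq_ecc G v
  rcases eq_or_ne w a with rfl | hwa
  · exact (mem_uniqueFarthest.1 hvb w hab).ne hw
  · exact (mem_uniqueFarthest.1 hva w hwa).ne hw

lemma ecc_le_ecc_induce_compl_singleton_add [DecidableEq V] (hG : G.Connected) {a : V}
    (hH : (G.induce {a}ᶜ).Connected) (v : ({a}ᶜ : Set V)) :
    ecc G v ≤ ecc (G.induce {a}ᶜ) v + if (v : V) ∈ uniqueFarthest G a then 1 else 0 := by
  split_ifs with hv
  · refine ecc_le_iff.2 fun u => ?_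
    rcases eq_or_ne a u with rfl | hua
    · obtain ⟨p⟩ := hG.preconnected a v
      have hadj := p.adj_snd (Walk.not_nil_of_ne (Ne.symm v.2))
      calc G.dist v a ≤ G.dist v p.snd + G.dist p.snd a := hG.dist_triangle
        _ ≤ ecc (G.induce {a}ᶜ) v + 1 := by
          gcongr
          · exact dist_le_ecc_induce hH v hadj.ne.symm
          · exact (dist_eq_one_iff_adj.2 hadj.symm).le
    · exact (dist_le_ecc_induce hH v hua.symm).trans (Nat.le_add_right _ _)
  · obtain ⟨u, hua, hu⟩ := by simpa [mem_uniqueFarthest] using hv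
    exact hu.trans (dist_le_ecc_induce hH v hua)

lemma sum_ecc_le_sum_ecc_induce_compl_singleton [DecidableEq V] (hG : G.Connected) {a : V}
    (hH : (G.induce {a}ᶜ).Connected) :
    ∑ v, ecc G v ≤
      ecc G a + ∑ v : ({a}ᶜ : Set V), ecc (G.induce {a}ᶜ) v + #(uniqueFarthest G a) := by
  have hsplit : ∑ v, ecc G v = ecc G a + ∑ v : ({a}ᶜ : Set V), ecc G v := by
    rw [← add_sum_erase _ _ (mem_univ a)]
    congr 1
    exact sum_subtype _ (by simp) _
  have hcount : ∑ v : ({a}ᶜ : Set V), (if (v : V) ∈ uniqueFarthest G a then 1 else 0)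
      ≤ #(uniqueFarthest G a) := by
    rw [sum_boole]
    exact card_le_card_of_injOn Subtype.val (fun _ hv => by simpa using hv)
      Subtype.val_injective.injOn
  calc ∑ v, ecc G v = ecc G a + ∑ v : ({a}ᶜ : Set V), ecc G v := hsplit
    _ ≤ ecc G a + ∑ v : ({a}ᶜ : Set V), (ecc (G.induce {a}ᶜ) v +
          if (v : V) ∈ uniqueFarthest G a then 1 else 0) := by
      gcongr with v
      exact ecc_le_ecc_induce_compl_singleton_add hG hH v
    _ ≤ _ := by
      rw [sum_add_distrib, ← add_assoc]
      gcongr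

lemma exists_connected_induce_compl_two_mul_card_uniqueFarthest_le [Nontrivial V]
    (hG : G.Connected) :
    ∃ a, (G.induce {a}ᶜ).Connected ∧ 2 * #(uniqueFarthest G a) ≤ Fintype.card V := by
  classical
  obtain ⟨a, b, hab⟩ := G.exists_dist_eq_diam
  have hdiam : G.ediam ≠ ⊤ := connected_iff_ediam_ne_top.1 hG
  have hne : a ≠ b := by
    rintro rfl
    exact diam_ne_zero_of_ediam_ne_top hdiam (by simpa using hab.symm)
  have hfar : ∀ u w, G.dist u w ≤ G.dist a b := fun u w => hab ▸ dist_le_diam hdiam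
  have hcard : #(uniqueFarthest G a) + #(uniqueFarthest G b) ≤ Fintype.card V :=
    (card_union_of_disjoint (disjoint_uniqueFarthest hne)).symm.le.trans (card_le_univ _)
  rcases le_total #(uniqueFarthest G a) #(uniqueFarthest G b) with h | h
  · exact ⟨a, hG.induce_compl_singleton_of_forall_dist_le hne (hfar · b), by omega⟩
  · refine ⟨b, hG.induce_compl_singleton_of_forall_dist_le hne.symm (fun u => ?_), by omega⟩
    simpa [dist_comm] using hfar u a

end UniqueFarthest

lemma three_mul_sq_sub_two_mul_div_four_succ (m : ℕ) :
    (3 * m ^ 2 - 2 * m) / 4 + m + (m + 1) / 2 = (3 * (m + 1) ^ 2 - 2 * (m + 1)) / 4 := by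
  obtain ⟨k, rfl | rfl⟩ := Nat.even_or_odd' m
  · rw [show (2 * k + 1) ^ 2 = 4 * (k * k) + 4 * k + 1 by ring,
      show (2 * k) ^ 2 = 4 * (k * k) by ring]
    have := Nat.le_mul_self k
    omega
  · rw [show (2 * k + 1 + 1) ^ 2 = 4 * (k * k) + 8 * k + 4 by ring,
      show (2 * k + 1) ^ 2 = 4 * (k * k) + 4 * k + 1 by ring]
    omega

theorem SimpleGraph.Connected.sum_ecc_le {V : Type*} [Fintype V] {G : SimpleGraph V}
    (hG : G.Connected) :
    ∑ v, ecc G v ≤ (3 * Fintype.card V ^ 2 - 2 * Fintype.card V) / 4 := by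
  classical
  induction hn : Fintype.card V using Nat.strong_induction_on generalizing V with | _ n ih
  rcases subsingleton_or_nontrivial V with hV | hV
  · simp [ecc_eq_zero]
  obtain ⟨a, hH, hK⟩ := exists_connected_induce_compl_two_mul_card_uniqueFarthest_le hG
  have hcard : Fintype.card ({a}ᶜ : Set V) + 1 = n := by
    rw [Fintype.card_compl_set, Set.card_singleton, ← hn]
    exact Nat.sub_add_cancel (Fintype.card_pos_iff.2 ⟨a⟩)
  have hsumH := ih _ (by omega) hH rfl
  have hsum := sum_ecc_le_sum_ecc_induce_compl_singleton hG hH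
  have hecc := hG.ecc_le_card_sub_one a
  have hstep := three_mul_sq_sub_two_mul_div_four_succ (Fintype.card ({a}ᶜ : Set V))
  rw [hcard] at hstep
  omega

lemma floor_three_mul_sq_div_four_sub_half (n : ℕ) :
    ⌊3 * (n : ℝ) ^ 2 / 4 - (n : ℝ) / 2⌋ = ((3 * n ^ 2 - 2 * n) / 4 : ℕ) := by
  have h :
      3 * (n : ℝ) ^ 2 / 4 - (n : ℝ) / 2 = ((3 * n ^ 2 - 2 * n : ℕ) : ℝ) / (4 : ℕ) := by
    rw [Nat.cast_sub (by nlinarith)]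
    push_cast
    ring
  rw [h, Int.floor_div_natCast, Int.floor_natCast]
  norm_cast

theorem stmt0 {V : Type*} [Fintype V] (G : SimpleGraph V) (hG : G.Connected)
    (n : ℕ) (hn : Fintype.card V = n) :
    avec G ≤ (1 / (n : ℝ)) * ((⌊3 * (n : ℝ) ^ 2 / 4 - (n : ℝ) / 2⌋ : ℤ) : ℝ) := by
  have hsum : (∑ v, (ecc G v : ℝ)) ≤ ((3 * n ^ 2 - 2 * n) / 4 : ℕ) := by
    exact_mod_cast hn ▸ hG.sum_ecc_le
  rw [avec, hn, floor_three_mul_sq_div_four_sub_half, Int.cast_natCast, one_div_mul_eq_div]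
  gcongr
end

section
/- Let G be a connected graph in which every vertex has degree at least δ, and let A ⊆ V(G) be a 2-packing of G (i.e., any two distinct vertices of A are at distance greater than 2) such that every vertex of G is within distance 2 of some vertex of A. If v₁ ∈ A has degree Δ, then |A| ≤ (n − Δ + δ)/(δ + 1), where n = |V(G)|. -/
open SimpleGraph Finset

/-- G contains no 4-cycle as a (not necessarily induced) subgraph. -/
def C4Free {V : Type*} (G : SimpleGraph V) : Prop :=
  ¬ ∃ a b c d : V, a ≠ c ∧ b ≠ d ∧ G.Adj a b ∧ G.Adj b c ∧ G.Adj c d ∧ G.Adj d a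

theorem stmt6 {V : Type*} [Fintype V] (G : SimpleGraph V) [DecidableRel G.Adj]
    (hG : G.Connected) (n δ Δ : ℕ) (hn : Fintype.card V = n)
    (hδ : ∀ v, δ ≤ G.degree v)
    (A : Finset V)
    (hpack : ∀ a ∈ A, ∀ b ∈ A, a ≠ b → 2 < G.dist a b)
    (hdom : ∀ x : V, ∃ a ∈ A, G.dist x a ≤ 2)
    (v₁ : V) (hv₁ : v₁ ∈ A) (hdeg : G.degree v₁ = Δ) :
    (A.card : ℝ) ≤ ((n : ℝ) - Δ + δ) / (δ + 1) := by
  classical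
  set N : V → Finset V := fun a => insert a (G.neighborFinset a) with hN
  have hdistN : ∀ a x, x ∈ N a → G.dist a x ≤ 1 := by
    intro a x hx
    simp only [hN, mem_insert, mem_neighborFinset] at hx
    rcases hx with rfl | h
    · simp [SimpleGraph.dist_self]
    · exact le_of_eq ((SimpleGraph.dist_eq_one_iff_adj).2 h)
  have hdisj : (A : Set V).PairwiseDisjoint N := by
    intro a ha b hb hab
    rw [Function.onFun, Finset.disjoint_left]
    intro x hxa hxb
    have h1 := hdistN a x hxa
    have h2 := hdistN b x hxb
    have : G.dist a b ≤ 2 := by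
      calc G.dist a b ≤ G.dist a x + G.dist x b := hG.dist_triangle
        _ ≤ 1 + 1 := add_le_add h1 (by rwa [SimpleGraph.dist_comm] at h2)
        _ = 2 := rfl
    exact absurd this (not_le.2 (hpack a ha b hb hab))
  have hcardN : ∀ a, (N a).card = G.degree a + 1 := by
    intro a
    rw [hN]
    rw [Finset.card_insert_of_notMem (by simp), card_neighborFinset_eq_degree]
  have hsum : ∑ a ∈ A, (N a).card ≤ n := by
    rw [← Finset.card_biUnion hdisj, ← hn]
    exact Finset.card_le_card (Finset.subset_univ _)
  have hv1card : (N v₁).card = Δ + 1 := by rw [hcardN, hdeg]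
  have hlow : (A.card - 1) * (δ + 1) ≤ ∑ a ∈ A.erase v₁, (N a).card := by
    calc (A.card - 1) * (δ + 1) = ∑ _a ∈ A.erase v₁, (δ + 1) := by
          rw [Finset.sum_const, Finset.card_erase_of_mem hv₁, smul_eq_mul]
      _ ≤ _ := Finset.sum_le_sum (fun a _ => by
          rw [hcardN]; have := hδ a; omega)
  have key : Δ + 1 + (A.card - 1) * (δ + 1) ≤ n :=
    calc Δ + 1 + (A.card - 1) * (δ + 1)
        ≤ (N v₁).card + ∑ a ∈ A.erase v₁, (N a).card := by
          rw [hv1card]; exact Nat.add_le_add_left hlow _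
      _ = ∑ a ∈ A, (N a).card := Finset.add_sum_erase A (fun a => (N a).card) hv₁
      _ ≤ n := hsum
  have hpos : 1 ≤ A.card := Finset.card_pos.2 ⟨v₁, hv₁⟩
  have keyR : (Δ : ℝ) + 1 + ((A.card : ℝ) - 1) * ((δ : ℝ) + 1) ≤ n := by
    have := (Nat.cast_le (α := ℝ)).2 key
    push_cast [Nat.cast_sub hpos] at this
    linarith
  rw [le_div_iff₀ (by positivity)]
  nlinarith [keyR]
end

section
/- Let G be a connected triangle-free graph with minimum degree δ and maximum degree Δ, and let M be a matching of G such that the sets N[V(e)] over e ∈ M partition-dominate V(G) in the sense that every vertex of G is within distance 2 of a vertex covered by M. If some edge of M is incident with a vertex of degree Δ, then |M| ≤ (n − Δ + δ)/(2δ), where n = |V(G)|. -/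
open SimpleGraph Finset

theorem stmt7 {V : Type*} [Fintype V] (G : SimpleGraph V) [DecidableRel G.Adj]
    (hG : G.Connected) (hfree : G.CliqueFree 3)
    (n δ Δ : ℕ) (hn : Fintype.card V = n)
    (hδ : G.minDegree = δ) (hΔ : G.maxDegree = Δ)
    (M : Finset (Sym2 V)) (hM : ∀ e ∈ M, e ∈ G.edgeSet)
    (hfar : ∀ e ∈ M, ∀ f ∈ M, e ≠ f → ∀ u ∈ e, ∀ v ∈ f, 3 ≤ G.dist u v)
    (hdom : ∀ x : V, ∃ e ∈ M, ∃ v ∈ e, G.dist x v ≤ 2)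
    (hinc : ∃ e ∈ M, ∃ v ∈ e, G.degree v = Δ) :
    (M.card : ℝ) ≤ ((n : ℝ) - Δ + δ) / (2 * δ) := by
  classical
  obtain ⟨e0, he0M, v0, hv0e, hv0Δ⟩ := hinc
  -- δ ≥ 1
  have hNE : Nonempty V := ⟨v0⟩
  have hδpos : 1 ≤ δ := by
    by_contra h
    have hδ0 : δ = 0 := by omega
    obtain ⟨u, hu⟩ := G.exists_minimal_degree_vertex
    have hu0 : G.degree u = 0 := by rw [← hu, hδ, hδ0]
    -- v0 has a neighbor
    obtain ⟨u0, w0, he0⟩ : ∃ a b, e0 = s(a, b) := Sym2.ind (fun a b => ⟨a, b, rfl⟩) e0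
    have hadj : G.Adj u0 w0 := G.mem_edgeSet.mp (by rw [← he0]; exact hM e0 he0M)
    obtain ⟨p⟩ := hG.preconnected u u0
    cases p with
    | nil => exact ((G.degree_pos_iff_exists_adj _).mpr ⟨w0, hadj⟩).ne' hu0
    | cons h q => exact (G.degree_pos_iff_exists_adj u).mpr ⟨_, h⟩ |>.ne' hu0
  -- the ball around each matched edge
  set B : Sym2 V → Finset V := fun e => univ.filter (fun x => ∃ w ∈ e, G.dist x w ≤ 1) with hB
  have hmemB : ∀ e x, x ∈ B e ↔ ∃ w ∈ e, G.dist x w ≤ 1 := by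
    intro e x; simp [hB]
  -- disjointness
  have hdisj : ∀ e ∈ M, ∀ f ∈ M, e ≠ f → Disjoint (B e) (B f) := by
    intro e he f hf hef
    rw [Finset.disjoint_left]
    intro x hxe hxf
    obtain ⟨w1, hw1, hd1⟩ := (hmemB e x).mp hxe
    obtain ⟨w2, hw2, hd2⟩ := (hmemB f x).mp hxf
    have h3 := hfar e he f hf hef w1 hw1 w2 hw2
    have htri := hG.dist_triangle (u := w1) (v := x) (w := w2)
    have hcomm : G.dist w1 x = G.dist x w1 := G.dist_comm
    omega
  -- per-edge cardinality bound
  have hcard : ∀ u v : V, G.Adj u v →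
      G.degree u + G.degree v ≤ (B s(u, v)).card := by
    intro u v huv
    have hsub : G.neighborFinset u ∪ G.neighborFinset v ⊆ B s(u, v) := by
      intro x hx
      rw [Finset.mem_union] at hx
      rw [hmemB]
      rcases hx with hx | hx
      · exact ⟨u, Sym2.mem_mk_left u v, le_of_eq (dist_eq_one_iff_adj.mpr
          ((G.mem_neighborFinset u x).mp hx).symm)⟩
      · exact ⟨v, Sym2.mem_mk_right u v, le_of_eq (dist_eq_one_iff_adj.mpr
          ((G.mem_neighborFinset v x).mp hx).symm)⟩
    have hd : Disjoint (G.neighborFinset u) (G.neighborFinset v) := by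
      rw [Finset.disjoint_left]
      intro w hwu hwv
      have h1 : G.Adj u w := (G.mem_neighborFinset u w).mp hwu
      have h2 : G.Adj v w := (G.mem_neighborFinset v w).mp hwv
      exact hfree {u, v, w} (is3Clique_triple_iff.mpr ⟨huv, h1, h2⟩)
    calc G.degree u + G.degree v
        = (G.neighborFinset u ∪ G.neighborFinset v).card := by
          rw [Finset.card_union_of_disjoint hd, G.card_neighborFinset_eq_degree,
            G.card_neighborFinset_eq_degree]
      _ ≤ (B s(u, v)).card := Finset.card_le_card hsub
  have hδdeg : ∀ v : V, δ ≤ G.degree v := fun v => hδ ▸ G.minDegree_le_degree v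
  -- bound for generic edges
  have hgen : ∀ e ∈ M, 2 * δ ≤ (B e).card := by
    intro e he
    obtain ⟨u, v, rfl⟩ : ∃ a b, e = s(a, b) := Sym2.ind (fun a b => ⟨a, b, rfl⟩) e
    have huv : G.Adj u v := G.mem_edgeSet.mp (hM _ he)
    have := hcard u v huv
    have := hδdeg u
    have := hδdeg v
    omega
  -- bound for the special edge
  have hspec : Δ + δ ≤ (B e0).card := by
    obtain ⟨u, v, rfl⟩ : ∃ a b, e0 = s(a, b) := Sym2.ind (fun a b => ⟨a, b, rfl⟩) e0
    have huv : G.Adj u v := G.mem_edgeSet.mp (hM _ he0M)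
    have hc := hcard u v huv
    have h1 := hδdeg u
    have h2 := hδdeg v
    rcases Sym2.mem_iff.mp hv0e with rfl | rfl <;> omega
  -- sum the disjoint balls
  have hsum : ∑ e ∈ M, (B e).card ≤ n := by
    rw [← Finset.card_biUnion hdisj, ← hn]
    exact Finset.card_le_card (Finset.subset_univ _)
  have hins : ∑ e ∈ M, (B e).card
      = (B e0).card + ∑ e ∈ M.erase e0, (B e).card := by
    conv_lhs => rw [← Finset.insert_erase he0M]
    exact Finset.sum_insert (Finset.notMem_erase e0 M)
  have herase : (M.erase e0).card * (2 * δ) ≤ ∑ e ∈ M.erase e0, (B e).card := by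
    have := Finset.card_nsmul_le_sum (M.erase e0) (fun e => (B e).card) (2 * δ)
      (fun e he => hgen e (Finset.mem_of_mem_erase he))
    simpa [smul_eq_mul] using this
  have hMpos : 1 ≤ M.card := Finset.card_pos.mpr ⟨e0, he0M⟩
  have hcarderase : (M.erase e0).card = M.card - 1 := Finset.card_erase_of_mem he0M
  have hkey : Δ + δ + M.card * (2 * δ) ≤ n + 2 * δ := by
    have h1 : Δ + δ + (M.card - 1) * (2 * δ) ≤ n := by
      calc Δ + δ + (M.card - 1) * (2 * δ)
          ≤ (B e0).card + ∑ e ∈ M.erase e0, (B e).card := by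
            rw [← hcarderase]; omega
        _ = ∑ e ∈ M, (B e).card := hins.symm
        _ ≤ n := hsum
    have : M.card * (2 * δ) = (M.card - 1) * (2 * δ) + 2 * δ := by
      obtain ⟨k, hk⟩ := Nat.exists_eq_succ_of_ne_zero (by omega : M.card ≠ 0)
      rw [hk]; simp [Nat.succ_sub_one, Nat.succ_mul]
    omega
  have h2δ : (0 : ℝ) < 2 * δ := by positivity
  rw [le_div_iff₀ h2δ]
  have : (Δ : ℝ) + δ + M.card * (2 * δ) ≤ n + 2 * δ := by exact_mod_cast hkey
  linarith
end

section
/- Let G be a connected graph, k a positive integer, and A ⊆ V(G) a set such that every vertex of G is within distance k of some vertex of A, and such that the graph G^k[A] (the subgraph of the k-th power of G induced by A) is connected. Then for every a ∈ A, e_G(a) ≤ k·e_{G^k[A]}(a) + k. -/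
open SimpleGraph Finset

/-- The k-th power of a graph: vertices adjacent iff distinct and at distance at most k. -/
noncomputable def powG {V : Type*} (G : SimpleGraph V) (k : ℕ) : SimpleGraph V where
  Adj u v := u ≠ v ∧ G.dist u v ≤ k
  symm := ⟨fun u v ⟨h1, h2⟩ => ⟨h1.symm, by rwa [SimpleGraph.dist_comm]⟩⟩
  loopless := ⟨fun u ⟨h1, _⟩ => h1 rfl⟩

/-! Every vertex is within `k` of a vertex `b ∈ A`, and `b` is reached from `a` by a
`G^k[A]`-geodesic of length at most `e_{G^k[A]}(a)`, each step of which covers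
`G`-distance at most `k`. -/

lemma le_ecc {V : Type*} [Fintype V] (G : SimpleGraph V) (v w : V) : G.dist v w ≤ ecc G v :=
  Finset.le_sup (Finset.mem_univ w)

section StretchedWalks

variable {V W : Type*} {G : SimpleGraph V} {H : SimpleGraph W} {f : W → V} {k : ℕ}

lemma SimpleGraph.Connected.dist_le_mul_length (hG : G.Connected)
    (hf : ∀ p q, H.Adj p q → G.dist (f p) (f q) ≤ k) {p q : W} (w : H.Walk p q) :
    G.dist (f p) (f q) ≤ k * w.length := by
  induction w with
  | nil => simp
  | @cons p r q hpr w ih =>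
    calc G.dist (f p) (f q) ≤ G.dist (f p) (f r) + G.dist (f r) (f q) := hG.dist_triangle
      _ ≤ k + k * w.length := Nat.add_le_add (hf p r hpr) ih
      _ = k * (Walk.cons hpr w).length := by rw [Walk.length_cons]; ring

lemma SimpleGraph.Connected.dist_le_mul_dist (hG : G.Connected)
    (hf : ∀ p q, H.Adj p q → G.dist (f p) (f q) ≤ k) {p q : W} (hpq : H.Reachable p q) :
    G.dist (f p) (f q) ≤ k * H.dist p q := by
  obtain ⟨w, hw⟩ := hpq.exists_walk_length_eq_dist
  exact hw ▸ hG.dist_le_mul_length hf w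

end StretchedWalks

lemma dist_le_of_adj_induce_powG {V : Type*} {G : SimpleGraph V} {k : ℕ} {s : Set V}
    (p q : s) (h : (SimpleGraph.induce s (powG G k)).Adj p q) : G.dist p.1 q.1 ≤ k :=
  h.2

theorem stmt9_general {V : Type*} [Fintype V] (G : SimpleGraph V) (hG : G.Connected)
    (k : ℕ)
    (A : Finset V) (hdom : ∀ x : V, ∃ a ∈ A, G.dist x a ≤ k)
    (hconn : (SimpleGraph.induce (↑A : Set V) (powG G k)).Connected)
    (a : V) (ha : a ∈ A) :
    ecc G a ≤ k * ecc (SimpleGraph.induce (↑A : Set V) (powG G k)) ⟨a, ha⟩ + k := by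
  set H := SimpleGraph.induce (↑A : Set V) (powG G k)
  refine Finset.sup_le fun x _ => ?_
  obtain ⟨b, hb, hbx⟩ := hdom x
  have hab : G.dist a b ≤ k * H.dist ⟨a, ha⟩ ⟨b, hb⟩ :=
    hG.dist_le_mul_dist (f := Subtype.val) dist_le_of_adj_induce_powG (hconn.preconnected ⟨a, ha⟩ ⟨b, hb⟩)
  calc G.dist a x ≤ G.dist a b + G.dist b x := hG.dist_triangle
    _ ≤ k * ecc H ⟨a, ha⟩ + k := by
      rw [G.dist_comm] at hbx
      gcongr
      exact hab.trans (Nat.mul_le_mul_left k (le_ecc H _ _))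

theorem stmt9 {V : Type*} [Fintype V] (G : SimpleGraph V) (hG : G.Connected)
    (k : ℕ) (hk : 0 < k)
    (A : Finset V) (hdom : ∀ x : V, ∃ a ∈ A, G.dist x a ≤ k)
    (hconn : (SimpleGraph.induce (↑A : Set V) (powG G k)).Connected)
    (a : V) (ha : a ∈ A) :
    ecc G a ≤ k * ecc (SimpleGraph.induce (↑A : Set V) (powG G k)) ⟨a, ha⟩ + k :=
  stmt9_general G hG k A hdom hconn a ha
end

section
/- Let G be a C_4-free graph with minimum degree δ ≥ 2, and let v be a vertex of odd degree Δ. Then |N²[v]| ≥ Δδ − Δ + 2. -/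
/-!
The closed neighbourhood `N[v]` has `Δ + 1` vertices. Since `G` is `C₄`-free, two distinct
vertices have at most one common neighbour. Hence each neighbour `u` of `v` is adjacent to at
most one other neighbour of `v`, so it has at least `δ - 2` neighbours outside `N[v]`, and for
distinct `u, u'` these outside neighbourhoods are disjoint (they already share `v`). The graph
induced on `N(v)` is thus a matching on an odd number of vertices, so by the handshake lemma
some neighbour of `v` has no neighbour in `N(v)` and contributes `δ - 1` instead of `δ - 2`.
Altogether `|N²[v]| ≥ 1 + Δ + (δ - 1) + (Δ - 1)(δ - 2) = Δδ - Δ + 2`.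
-/

open SimpleGraph Finset

/-- The set of vertices within distance 2 of v (the second closed neighbourhood). -/
def N2 {V : Type*} (G : SimpleGraph V) (v : V) : Set V :=
  {x | x = v ∨ G.Adj v x ∨ ∃ w, G.Adj v w ∧ G.Adj w x}

theorem Finset.card_le_card_sdiff_insert_add_card_inter_add_one {α : Type*} [DecidableEq α]
    (t s : Finset α) (a : α) : #t ≤ #(t \ insert a s) + #(t ∩ s) + 1 := by
  have hsub : t ⊆ insert a (t \ insert a s ∪ t ∩ s) := by
    intro x hx
    by_cases hxs : x ∈ s <;> by_cases hxa : x = a <;> simp_all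
  calc #t ≤ #(insert a (t \ insert a s ∪ t ∩ s)) := card_le_card hsub
    _ ≤ #(t \ insert a s ∪ t ∩ s) + 1 := card_insert_le _ _
    _ ≤ #(t \ insert a s) + #(t ∩ s) + 1 := by grw [card_union_le]

namespace SimpleGraph

variable {V : Type*} [Fintype V] [DecidableEq V] {G : SimpleGraph V} [DecidableRel G.Adj]

variable (G) in
theorem even_sum_card_neighborFinset_inter (s : Finset V) :
    Even (∑ u ∈ s, #(G.neighborFinset u ∩ s)) := by
  have hdeg (x : (s : Set V)) : (G.induce s).degree x = #(G.neighborFinset x ∩ s) := by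
    have := congrArg card (map_neighborFinset_induce (G := G) x)
    rw [card_map, Finset.toFinset_coe] at this
    rw [← card_neighborFinset_eq_degree]
    convert this
  have hsum := (G.induce (s : Set V)).sum_degrees_eq_twice_card_edges
  simp only [hdeg] at hsum
  rw [← Finset.sum_coe_sort s]
  exact ⟨_, hsum.trans (two_mul _)⟩

theorem exists_card_neighborFinset_inter_eq_zero_of_odd {s : Finset V} (hs : Odd #s)
    (h : ∀ u ∈ s, #(G.neighborFinset u ∩ s) ≤ 1) :
    ∃ u ∈ s, #(G.neighborFinset u ∩ s) = 0 := by
  by_contra! hpos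
  have hsum : ∑ u ∈ s, #(G.neighborFinset u ∩ s) = #s := by
    rw [card_eq_sum_ones]
    exact sum_congr rfl fun u hu => le_antisymm (h u hu) (Nat.one_le_iff_ne_zero.2 (hpos u hu))
  exact Nat.not_even_iff_odd.2 hs (hsum ▸ G.even_sum_card_neighborFinset_inter s)

end SimpleGraph

namespace C4Free

variable {V : Type*} [Fintype V] [DecidableEq V] {G : SimpleGraph V} [DecidableRel G.Adj]

theorem card_neighborFinset_inter_le_one (hG : C4Free G) {a c : V} (hac : a ≠ c) :
    #(G.neighborFinset a ∩ G.neighborFinset c) ≤ 1 := by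
  rw [card_le_one]
  intro b hb d hd
  simp only [mem_inter, mem_neighborFinset] at hb hd
  by_contra hbd
  exact hG ⟨a, b, c, d, hac, hbd, hb.1, hb.2.symm, hd.2, hd.1.symm⟩

theorem pairwiseDisjoint_neighborFinset_sdiff (hG : C4Free G) (v : V) :
    (G.neighborFinset v : Set V).PairwiseDisjoint
      fun u => G.neighborFinset u \ insert v (G.neighborFinset v) := by
  intro u hu u' hu' huu'
  rw [Function.onFun, Finset.disjoint_left]
  intro x hx hx'
  rw [mem_sdiff] at hx hx'
  have hcommon : ∀ y ∈ G.neighborFinset u ∩ G.neighborFinset u', y = v := fun y hy =>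
    card_le_one.1 (hG.card_neighborFinset_inter_le_one huu') y hy v <| by
      simp only [coe_neighborFinset, mem_neighborSet, mem_inter, mem_neighborFinset] at hu hu' ⊢
      exact ⟨hu.symm, hu'.symm⟩
  exact hx.2 (by rw [hcommon x (mem_inter.2 ⟨hx.1, hx'.1⟩)]; exact mem_insert_self v _)

theorem add_degree_add_sum_card_le_natCard_N2 (hG : C4Free G) (v : V) :
    1 + G.degree v +
        ∑ u ∈ G.neighborFinset v, #(G.neighborFinset u \ insert v (G.neighborFinset v)) ≤
      Nat.card (N2 G v) := by
  set S := G.neighborFinset v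
  set B := insert v S ∪ S.biUnion fun u => G.neighborFinset u \ insert v S
  have hsub : (B : Set V) ⊆ N2 G v := by
    intro x hx
    simp only [B, coe_union, Set.mem_union, mem_coe, mem_insert, mem_biUnion, mem_sdiff, S,
      mem_neighborFinset] at hx
    rcases hx with (rfl | hvx) | ⟨u, hvu, hux, -⟩
    · exact Or.inl rfl
    · exact Or.inr (Or.inl hvx)
    · exact Or.inr (Or.inr ⟨u, hvu, hux⟩)
  have hvS : v ∉ S := by simp [S]
  have hB : #B = 1 + G.degree v + ∑ u ∈ S, #(G.neighborFinset u \ insert v S) := by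
    rw [card_union_of_disjoint ((disjoint_biUnion_right _ _ _).2 fun u _ => disjoint_sdiff),
      card_insert_of_notMem hvS, card_biUnion (hG.pairwiseDisjoint_neighborFinset_sdiff v),
      card_neighborFinset_eq_degree]
    ring
  rw [← hB, Nat.card_coe_set_eq, ← Set.ncard_coe_finset]
  exact Set.ncard_le_ncard hsub

end C4Free

theorem stmt13_general {V : Type*} [Fintype V] (G : SimpleGraph V) [DecidableRel G.Adj]
    (hC4 : C4Free G) (δ Δ : ℕ) (hmin : ∀ v, δ ≤ G.degree v)
    (v : V) (hdeg : G.degree v = Δ) (hodd : Odd Δ) :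
    Δ * δ - Δ + 2 ≤ Nat.card (N2 G v) := by
  classical
  have hN2 := hC4.add_degree_add_sum_card_le_natCard_N2 v
  rw [hdeg] at hN2
  set S := G.neighborFinset v
  have hS : #S = Δ := by rw [card_neighborFinset_eq_degree, hdeg]
  have hone : ∀ u ∈ S, #(G.neighborFinset u ∩ S) ≤ 1 := fun u hu =>
    hC4.card_neighborFinset_inter_le_one (G.ne_of_adj ((mem_neighborFinset G v u).1 hu)).symm
  obtain ⟨u₀, hu₀, hu₀S⟩ := exists_card_neighborFinset_inter_eq_zero_of_odd (hS ▸ hodd) hone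
  have hinner : ∑ u ∈ S, #(G.neighborFinset u ∩ S) + 1 ≤ Δ := by
    rw [← add_sum_erase S _ hu₀, hu₀S, zero_add, ← hS, ← card_erase_add_one hu₀]
    simpa using sum_le_card_nsmul _ _ 1 fun u hu => hone u (mem_of_mem_erase hu)
  have hlayers : Δ * δ ≤ ∑ u ∈ S, #(G.neighborFinset u \ insert v S) +
      ∑ u ∈ S, #(G.neighborFinset u ∩ S) + Δ := by
    calc Δ * δ = ∑ _u ∈ S, δ := by rw [sum_const, hS, smul_eq_mul]
      _ ≤ ∑ u ∈ S, (#(G.neighborFinset u \ insert v S) + #(G.neighborFinset u ∩ S) + 1) :=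
        sum_le_sum fun u _ => (hmin u).trans <| by
          rw [← card_neighborFinset_eq_degree]
          exact card_le_card_sdiff_insert_add_card_inter_add_one _ _ _
      _ = _ := by rw [sum_add_distrib, sum_add_distrib, sum_const, hS, smul_eq_mul, mul_one]
  omega

theorem stmt13 {V : Type*} [Fintype V] (G : SimpleGraph V) [DecidableRel G.Adj]
    (hC4 : C4Free G) (δ Δ : ℕ) (hδ2 : 2 ≤ δ) (hmin : ∀ v, δ ≤ G.degree v)
    (v : V) (hdeg : G.degree v = Δ) (hodd : Odd Δ) :
    Δ * δ - Δ + 2 ≤ Nat.card (N2 G v) :=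
  stmt13_general G hC4 δ Δ hmin v hdeg hodd
end

section
/- Let G be a C_4-free graph with minimum degree δ and maximum degree Δ ≥ δ ≥ 2, and v a vertex of degree Δ. Then |N²[v]| ≥ Δδ − 2⌊Δ/2⌋ + 1. -/
open SimpleGraph Finset

private lemma even_card_invol {V : Type*} [DecidableEq V] (s : Finset V) (f : V → V)
    (hmem : ∀ a ∈ s, f a ∈ s) (hinv : ∀ a ∈ s, f (f a) = a) (hne : ∀ a ∈ s, f a ≠ a) :
    Even s.card := by
  induction s using Finset.strongInduction with
  | _ s ih =>
    rcases s.eq_empty_or_nonempty with rfl | ⟨a, ha⟩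
    · simp
    · have hfa : f a ∈ s := hmem a ha
      have hfa' : f a ≠ a := hne a ha
      set t := (s.erase a).erase (f a) with ht
      have htsub : t ⊂ s := by
        refine Finset.ssubset_of_subset_of_ssubset ?_ (Finset.erase_ssubset ha)
        exact Finset.erase_subset _ _
      have hmt : ∀ b ∈ t, b ∈ s ∧ b ≠ a ∧ b ≠ f a := by
        intro b hb
        simp only [ht, Finset.mem_erase] at hb
        exact ⟨hb.2.2, hb.2.1, hb.1⟩
      have heven : Even t.card := by
        apply ih t htsub
        · intro b hb
          obtain ⟨hbs, hba, hbfa⟩ := hmt b hb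
          have h1 : f b ∈ s := hmem b hbs
          have h2 : f b ≠ f a := fun h => hba (by
            have := congrArg f h
            rwa [hinv b hbs, hinv a ha] at this)
          have h3 : f b ≠ a := fun h => hbfa (by
            have := congrArg f h
            rwa [hinv b hbs] at this)
          simp only [ht, Finset.mem_erase]
          exact ⟨h2, h3, h1⟩
        · intro b hb; exact hinv b (hmt b hb).1
        · intro b hb; exact hne b (hmt b hb).1
      have hcard : s.card = t.card + 2 := by
        have h1 : (s.erase a).card = s.card - 1 := Finset.card_erase_of_mem ha
        have h2 : t.card = (s.erase a).card - 1 := by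
          refine Finset.card_erase_of_mem ?_
          exact Finset.mem_erase.mpr ⟨hfa', hfa⟩
        have hpos : 0 < s.card := Finset.card_pos.mpr ⟨a, ha⟩
        have hpos2 : 0 < (s.erase a).card :=
          Finset.card_pos.mpr ⟨f a, Finset.mem_erase.mpr ⟨hfa', hfa⟩⟩
        omega
      rw [hcard]
      exact heven.add (by norm_num)

theorem stmt14 {V : Type*} [Fintype V] (G : SimpleGraph V) [DecidableRel G.Adj]
    (hC4 : C4Free G) (δ Δ : ℕ) (hδ2 : 2 ≤ δ) (hΔδ : δ ≤ Δ)
    (hmin : ∀ u, δ ≤ G.degree u) (hmax : ∀ u, G.degree u ≤ Δ)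
    (v : V) (hdeg : G.degree v = Δ) :
    Δ * δ - 2 * (Δ / 2) + 1 ≤ Nat.card (N2 G v) := by
  classical
  set S := G.neighborFinset v with hS
  have hSmem : ∀ u, u ∈ S ↔ G.Adj v u := fun u => G.mem_neighborFinset v u
  have hcardS : S.card = Δ := by rw [hS, G.card_neighborFinset_eq_degree, hdeg]
  have hvS : v ∉ S := by simp [hSmem]
  -- key C4-free uniqueness
  have uniq : ∀ x, x ≠ v → ∀ u1 ∈ S, ∀ u2 ∈ S, u1 ≠ u2 →
      G.Adj u1 x → G.Adj u2 x → False := by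
    intro x hx u1 h1 u2 h2 hne a1 a2
    exact hC4 ⟨v, u1, x, u2, Ne.symm hx, hne, (hSmem u1).1 h1, a1, a2.symm,
      ((hSmem u2).1 h2).symm⟩
  set A : V → Finset V := fun u => (G.neighborFinset u).erase v with hA
  have hAmem : ∀ u x, x ∈ A u ↔ x ≠ v ∧ G.Adj u x := by
    intro u x; simp [hA, Finset.mem_erase]
  set T := S.biUnion A with hT
  have hvT : v ∉ T := by
    simp only [hT, Finset.mem_biUnion]
    rintro ⟨u, _, hu⟩
    exact (((hAmem u v).1 hu).1) rfl
  have hdisj : ∀ u1 ∈ S, ∀ u2 ∈ S, u1 ≠ u2 → Disjoint (A u1) (A u2) := by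
    intro u1 h1 u2 h2 hne
    refine Finset.disjoint_left.mpr fun x hx1 hx2 => ?_
    exact uniq x ((hAmem u1 x).1 hx1).1 u1 h1 u2 h2 hne
      ((hAmem u1 x).1 hx1).2 ((hAmem u2 x).1 hx2).2
  have hcardA : ∀ u ∈ S, δ - 1 ≤ (A u).card := by
    intro u hu
    have hvmem : v ∈ G.neighborFinset u := (G.mem_neighborFinset u v).2 ((hSmem u).1 hu).symm
    have : (A u).card = G.degree u - 1 := by
      rw [hA]; rw [Finset.card_erase_of_mem hvmem, G.card_neighborFinset_eq_degree]
    rw [this]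
    have := hmin u; omega
  have hcardT : Δ * (δ - 1) ≤ T.card := by
    rw [hT, Finset.card_biUnion hdisj]
    calc Δ * (δ - 1) = ∑ _u ∈ S, (δ - 1) := by rw [Finset.sum_const, hcardS]; ring
    _ ≤ ∑ u ∈ S, (A u).card := Finset.sum_le_sum hcardA
  -- matching part : M = S ∩ T has even card
  set M := S ∩ T with hM
  have hpartner : ∀ u ∈ M, ∃ u' ∈ S, G.Adj u' u := by
    intro u hu
    have huT : u ∈ T := (Finset.mem_inter.1 hu).2
    obtain ⟨u', hu', hmem⟩ := Finset.mem_biUnion.1 huT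
    exact ⟨u', hu', ((hAmem u' u).1 hmem).2⟩
  set f : V → V := fun u => if h : ∃ u' ∈ S, G.Adj u' u then h.choose else u with hf
  have hfspec : ∀ u ∈ M, f u ∈ S ∧ G.Adj (f u) u := by
    intro u hu
    have h := hpartner u hu
    simp only [hf, dif_pos h]
    exact ⟨h.choose_spec.1, h.choose_spec.2⟩
  have hfuniq : ∀ u ∈ M, ∀ w ∈ S, G.Adj w u → w = f u := by
    intro u hu w hw hadj
    have huv : u ≠ v := fun h => hvS (h ▸ (Finset.mem_inter.1 hu).1)
    by_contra hne
    exact uniq u huv w hw (f u) (hfspec u hu).1 hne hadj (hfspec u hu).2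
  have hfM : ∀ u ∈ M, f u ∈ M := by
    intro u hu
    have ⟨hfS, hfadj⟩ := hfspec u hu
    have huS : u ∈ S := (Finset.mem_inter.1 hu).1
    have : f u ∈ T := Finset.mem_biUnion.2 ⟨u, huS, (hAmem u (f u)).2
      ⟨fun h => hvS (h ▸ hfS), hfadj.symm⟩⟩
    exact Finset.mem_inter.2 ⟨hfS, this⟩
  have hfinv : ∀ u ∈ M, f (f u) = u := by
    intro u hu
    have huS : u ∈ S := (Finset.mem_inter.1 hu).1
    exact (hfuniq (f u) (hfM u hu) u huS (hfspec u hu).2.symm).symm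
  have hfne : ∀ u ∈ M, f u ≠ u := by
    intro u hu h
    exact G.irrefl (h ▸ (hfspec u hu).2)
  have heven : Even M.card := even_card_invol M f hfM hfinv hfne
  have hMle : M.card ≤ Δ := hcardS ▸ Finset.card_le_card (Finset.inter_subset_left)
  have hMbound : M.card ≤ 2 * (Δ / 2) := by
    obtain ⟨k, hk⟩ := heven
    omega
  -- final finset
  set F := insert v (T ∪ (S \ T)) with hF
  have hvnot : v ∉ T ∪ (S \ T) := by
    simp only [Finset.mem_union, Finset.mem_sdiff]
    rintro (h | ⟨h, _⟩)
    exacts [hvT h, hvS h]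
  have hcardF : F.card = 1 + T.card + (Δ - M.card) := by
    rw [hF, Finset.card_insert_of_notMem hvnot,
      Finset.card_union_of_disjoint (Finset.disjoint_sdiff)]
    have : (S \ T).card = Δ - M.card := by
      have h := Finset.card_sdiff_add_card_inter S T
      rw [← hM] at h
      omega
    omega
  have hFsub : (F : Set V) ⊆ N2 G v := by
    intro x hx
    simp only [hF, Finset.coe_insert, Set.mem_insert_iff, Finset.mem_coe,
      Finset.mem_union, Finset.mem_sdiff] at hx
    rcases hx with rfl | hT' | ⟨hxS, _⟩
    · exact Or.inl rfl
    · obtain ⟨u, huS, hmem⟩ := Finset.mem_biUnion.1 hT'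
      exact Or.inr (Or.inr ⟨u, (hSmem u).1 huS, ((hAmem u x).1 hmem).2⟩)
    · exact Or.inr (Or.inl ((hSmem x).1 hxS))
  have hcard_ge : F.card ≤ Nat.card (N2 G v) := by
    rw [Nat.card_coe_set_eq]
    calc F.card = (F : Set V).ncard := (Set.ncard_coe_finset F).symm
    _ ≤ (N2 G v).ncard := Set.ncard_le_ncard hFsub (Set.toFinite _)
  have hmul : Δ * δ = Δ * (δ - 1) + Δ := by
    have h1 : δ - 1 + 1 = δ := by omega
    calc Δ * δ = Δ * (δ - 1 + 1) := by rw [h1]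
    _ = Δ * (δ - 1) + Δ := by ring
  omega
end

section
/- Let q be a prime power and H the polarity graph whose vertices are the 1-dimensional subspaces of GF(q)³, with two vertices adjacent iff the subspaces are orthogonal. Then H is C_4-free, has q² + q + 1 vertices, diameter 2, and every vertex has degree q or q+1 (degree q exactly when the corresponding subspace is self-orthogonal). -/
open SimpleGraph Finset

/-- The polarity graph of `PG(2,q)`: vertices are the 1-dimensional subspaces of `F³`,
two subspaces adjacent iff they are distinct and orthogonal w.r.t. the standard
bilinear form. -/
def polarityGraph (F : Type*) [Field F] :
    SimpleGraph {W : Submodule F (Fin 3 → F) // Module.finrank F W = 1} where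
  Adj W₁ W₂ := W₁ ≠ W₂ ∧ ∀ x ∈ W₁.1, ∀ y ∈ W₂.1, ∑ i, x i * y i = 0
  symm := by
    constructor
    rintro W₁ W₂ ⟨hne, h⟩
    refine ⟨hne.symm, fun y hy x hx => ?_⟩
    rw [Finset.sum_congr rfl (fun i _ => mul_comm (y i) (x i))]
    exact h x hx y hy
  loopless := ⟨fun W h => h.1 rfl⟩

/-- A 1-dimensional subspace is self-orthogonal if the standard bilinear form
vanishes on it. -/
def SelfOrth {F : Type*} [Field F] (W : Submodule F (Fin 3 → F)) : Prop :=
  ∀ x ∈ W, ∀ y ∈ W, ∑ i, x i * y i = 0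

/-!
The standard form on `F³` is nondegenerate, so `W ↦ W^⊥` (`polar`) sends the points of `PG(2, F)` injectively
to lines (2-dimensional subspaces), and `U` is adjacent to `W` iff `U ≠ W` and `U ≤ W^⊥`.
Two distinct lines of the plane meet in exactly one point, so two distinct points `u ≠ v` have at most
one common neighbour (no `C₄`), namely the point `u^⊥ ⊓ v^⊥`, which also gives diameter 2. The
neighbours of `W` are the `q + 1` points on the line `W^⊥`, less `W` itself when `W ≤ W^⊥`.
-/

open Module Submodule LinearMap

section DotForm

variable (F n : Type*) [Field F] [Fintype n] [DecidableEq n]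

def dotForm : LinearMap.BilinForm F (n → F) := Matrix.toBilin' 1

variable {F n}

theorem dotForm_apply (x y : n → F) : dotForm F n x y = ∑ i, x i * y i := by
  simp [dotForm, Matrix.toBilin'_apply', dotProduct]

theorem dotForm_nondegenerate : (dotForm F n).Nondegenerate :=
  BilinForm.nondegenerate_toBilin'_of_det_ne_zero' _ (by simp)

theorem dotForm_isRefl : (dotForm F n).IsRefl :=
  (Matrix.isSymm_toBilin'_iff_isSymm.mpr (Matrix.isSymm_one (α := F))).isRefl

theorem le_orthogonal_dotForm_iff {W U : Submodule F (n → F)} :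
    U ≤ (dotForm F n).orthogonal W ↔ ∀ x ∈ W, ∀ y ∈ U, ∑ i, x i * y i = 0 := by
  simp only [SetLike.le_def, BilinForm.mem_orthogonal_iff, dotForm_apply]
  exact forall₂_comm

end DotForm

section Lines

variable {K V : Type*} [Field K] [AddCommGroup V] [Module K V]

def linesLeEquiv (P : Submodule K V) :
    {W : Submodule K P // finrank K W = 1} ≃
      {U : {W : Submodule K V // finrank K W = 1} // U.1 ≤ P} :=
  ((MapSubtype.orderIso P).toEquiv.subtypeEquiv fun W => by
      rw [← finrank_map_subtype_eq P W]; rfl).trans <|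
    (Equiv.subtypeSubtypeEquivSubtypeInter _ _).trans <|
      (Equiv.subtypeEquivRight fun _ => and_comm).trans
        (Equiv.subtypeSubtypeEquivSubtypeInter _ _).symm

theorem ncard_setOf_line_le_of_finrank_eq_two [Finite K] {P : Submodule K V}
    (hP : finrank K P = 2) :
    {U : {W : Submodule K V // finrank K W = 1} | U.1 ≤ P}.ncard = Nat.card K + 1 := by
  rw [← Nat.card_coe_set_eq, Set.coe_ofPred, ← Nat.card_congr (linesLeEquiv P),
    ← Nat.card_congr (Projectivization.equivSubmodule K P),
    Projectivization.card_of_finrank_two K P hP]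

theorem finrank_inf_eq_one_of_ne [FiniteDimensional K V] (hV : finrank K V = 3)
    {P Q : Submodule K V} (hP : finrank K P = 2) (hQ : finrank K Q = 2) (hPQ : P ≠ Q) :
    finrank K ↥(P ⊓ Q) = 1 := by
  have hlt : P < P ⊔ Q := lt_of_le_of_ne le_sup_left fun h =>
    hPQ (eq_of_le_of_finrank_le (le_sup_right.trans h.ge) (by rw [hP, hQ])).symm
  have := finrank_lt_finrank_of_lt hlt
  have := (P ⊔ Q).finrank_le
  have := finrank_sup_add_finrank_inf_eq P Q
  omega

end Lines

namespace PolarityGraph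

variable {F : Type*} [Field F]

abbrev Point (F : Type*) [Field F] := {W : Submodule F (Fin 3 → F) // finrank F W = 1}

def polar (W : Point F) : Submodule F (Fin 3 → F) := (dotForm F (Fin 3)).orthogonal W.1

theorem finrank_polar (W : Point F) : finrank F (polar W) = 2 := by
  rw [polar, BilinForm.finrank_orthogonal dotForm_nondegenerate, W.2, finrank_fin_fun]

theorem polar_injective : Function.Injective (polar (F := F)) := fun W U h =>
  Subtype.ext <| by
    rw [← BilinForm.orthogonal_orthogonal dotForm_nondegenerate dotForm_isRefl W.1,
      ← BilinForm.orthogonal_orthogonal dotForm_nondegenerate dotForm_isRefl U.1]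
    exact congrArg _ h

theorem adj_iff {W U : Point F} : (polarityGraph F).Adj W U ↔ W ≠ U ∧ U.1 ≤ polar W := by
  rw [polar, le_orthogonal_dotForm_iff]
  rfl

theorem selfOrth_iff (W : Point F) : SelfOrth W.1 ↔ W.1 ≤ polar W := by
  rw [polar, le_orthogonal_dotForm_iff]
  rfl

theorem neighborSet_eq (W : Point F) :
    (polarityGraph F).neighborSet W = {U | U.1 ≤ polar W} \ {W} := by
  ext U
  simp [adj_iff, and_comm, eq_comm]

theorem exists_eq_polar_inf_polar {u v : Point F} (huv : u ≠ v) :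
    ∃ w : Point F, w.1 = polar u ⊓ polar v :=
  ⟨⟨_, finrank_inf_eq_one_of_ne (finrank_fin_fun F) (finrank_polar u) (finrank_polar v)
    (polar_injective.ne huv)⟩, rfl⟩

theorem c4Free : C4Free (polarityGraph F) := by
  rintro ⟨a, b, c, d, hac, hbd, hab, hbc, hcd, hda⟩
  obtain ⟨w, hw⟩ := exists_eq_polar_inf_polar hac
  have hb : b.1 = w.1 := eq_of_le_of_finrank_eq
    (hw ▸ le_inf (adj_iff.1 hab).2 (adj_iff.1 hbc.symm).2) (by rw [b.2, w.2])
  have hd : d.1 = w.1 := eq_of_le_of_finrank_eq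
    (hw ▸ le_inf (adj_iff.1 hda.symm).2 (adj_iff.1 hcd).2) (by rw [d.2, w.2])
  exact hbd (Subtype.ext (hb.trans hd.symm))

theorem adj_or_exists_adj_adj {u v : Point F} (huv : u ≠ v) :
    (polarityGraph F).Adj u v ∨ ∃ w, (polarityGraph F).Adj u w ∧ (polarityGraph F).Adj w v := by
  obtain ⟨w, hw⟩ := exists_eq_polar_inf_polar huv
  have hwu : w.1 ≤ polar u := hw ▸ inf_le_left
  have hwv : w.1 ≤ polar v := hw ▸ inf_le_right
  by_cases hu : w = u
  · exact .inl (adj_iff.2 ⟨huv.symm, hu ▸ hwv⟩).symm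
  by_cases hv : w = v
  · exact .inl (adj_iff.2 ⟨huv, hv ▸ hwu⟩)
  exact .inr ⟨w, adj_iff.2 ⟨Ne.symm hu, hwu⟩, (adj_iff.2 ⟨Ne.symm hv, hwv⟩).symm⟩

theorem exists_walk_length_le_two (u v : Point F) :
    ∃ p : (polarityGraph F).Walk u v, p.length ≤ 2 := by
  obtain rfl | huv := eq_or_ne u v
  · exact ⟨.nil, by simp⟩
  rcases adj_or_exists_adj_adj huv with h | ⟨w, huw, hwv⟩
  · exact ⟨h.toWalk, by simp⟩
  · exact ⟨.cons huw hwv.toWalk, by simp⟩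

theorem dist_le_two (u v : Point F) : (polarityGraph F).dist u v ≤ 2 :=
  let ⟨p, hp⟩ := exists_walk_length_le_two u v
  (dist_le p).trans hp

theorem dist_eq_two {u v : Point F} (huv : u ≠ v) (h : ¬(polarityGraph F).Adj u v) :
    (polarityGraph F).dist u v = 2 :=
  le_antisymm (dist_le_two u v) <|
    (exists_walk_length_le_two u v).elim fun p _ => p.reachable.one_lt_dist_of_ne_of_not_adj huv h

def mkPoint {x : Fin 3 → F} (hx : x ≠ 0) : Point F := ⟨span F {x}, finrank_span_singleton hx⟩

theorem not_adj_mkPoint {x y : Fin 3 → F} (hx : x ≠ 0) (hy : y ≠ 0) (hxy : ∑ i, x i * y i ≠ 0) :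
    ¬(polarityGraph F).Adj (mkPoint hx) (mkPoint hy) := fun h =>
  hxy (h.2 x (mem_span_singleton_self x) y (mem_span_singleton_self y))

theorem exists_dist_eq_two : ∃ u v : Point F, (polarityGraph F).dist u v = 2 := by
  have he₀ : (Pi.single 0 1 : Fin 3 → F) ≠ 0 := by simp
  have he₀₁ : (Pi.single 0 1 + Pi.single 1 1 : Fin 3 → F) ≠ 0 := fun h => by
    simpa using congrFun h 0
  refine ⟨mkPoint he₀, mkPoint he₀₁, dist_eq_two (fun h => ?_)
    (not_adj_mkPoint _ _ (by simp [Fin.sum_univ_three]))⟩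
  obtain ⟨c, hc⟩ := span_singleton_eq_span_singleton.1 (congrArg Subtype.val h)
  simpa using congrFun hc 1

section Finite

variable [Finite F]

theorem card_point : Nat.card (Point F) = Nat.card F ^ 2 + Nat.card F + 1 := by
  rw [← Nat.card_congr (Projectivization.equivSubmodule F (Fin 3 → F)),
    Projectivization.card_of_finrank F _ (finrank_fin_fun F)]
  simp [Finset.sum_range_succ]
  ring

theorem card_neighborSet_of_selfOrth {W : Point F} (h : SelfOrth W.1) :
    Nat.card ((polarityGraph F).neighborSet W) = Nat.card F := by
  rw [Nat.card_coe_set_eq, neighborSet_eq, Set.ncard_sdiff_singleton_of_mem ((selfOrth_iff W).1 h),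
    ncard_setOf_line_le_of_finrank_eq_two (finrank_polar W), Nat.add_sub_cancel]

theorem card_neighborSet_of_not_selfOrth {W : Point F} (h : ¬SelfOrth W.1) :
    Nat.card ((polarityGraph F).neighborSet W) = Nat.card F + 1 := by
  rw [Nat.card_coe_set_eq, neighborSet_eq, Set.sdiff_singleton_eq_self (mt (selfOrth_iff W).2 h),
    ncard_setOf_line_le_of_finrank_eq_two (finrank_polar W)]

end Finite

end PolarityGraph

open PolarityGraph in
theorem stmt18_general (q : ℕ) (F : Type*) [Field F] [Fintype F]
    (hF : Fintype.card F = q) :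
    C4Free (polarityGraph F)
      ∧ Nat.card {W : Submodule F (Fin 3 → F) // Module.finrank F W = 1}
          = q ^ 2 + q + 1
      ∧ (∀ u v, (polarityGraph F).dist u v ≤ 2)
      ∧ (∃ u v, (polarityGraph F).dist u v = 2)
      ∧ (∀ W : {W : Submodule F (Fin 3 → F) // Module.finrank F W = 1},
          (SelfOrth W.1 → Nat.card ((polarityGraph F).neighborSet W) = q)
          ∧ (¬SelfOrth W.1 → Nat.card ((polarityGraph F).neighborSet W) = q + 1)) := by
  rw [← hF, ← Nat.card_eq_fintype_card]
  exact ⟨c4Free, card_point, dist_le_two, exists_dist_eq_two,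
    fun _ => ⟨card_neighborSet_of_selfOrth, card_neighborSet_of_not_selfOrth⟩⟩

theorem stmt18 (q : ℕ) (hq : IsPrimePow q) (F : Type*) [Field F] [Fintype F]
    (hF : Fintype.card F = q) :
    C4Free (polarityGraph F)
      ∧ Nat.card {W : Submodule F (Fin 3 → F) // Module.finrank F W = 1}
          = q ^ 2 + q + 1
      ∧ (∀ u v, (polarityGraph F).dist u v ≤ 2)
      ∧ (∃ u v, (polarityGraph F).dist u v = 2)
      ∧ (∀ W : {W : Submodule F (Fin 3 → F) // Module.finrank F W = 1},
          (SelfOrth W.1 → Nat.card ((polarityGraph F).neighborSet W) = q)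
          ∧ (¬SelfOrth W.1 → Nat.card ((polarityGraph F).neighborSet W) = q + 1)) :=
  stmt18_general q F hF
end
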